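/- If there exists a decreasing sequence A_0 ⊇ A_1 ⊇ ... of subsets of κ such that every finite intersection ⋂_{k≤n} A_k is I-positive but ⋂_{k∈ω} A_k ∈ I, then the metric space X(I) is not complete. -/
import Mathlib


/-- The `I`-positive sets. -/
abbrev PosSet {κ : Type*} (I : Set (Set κ)) : Type _ := {A : Set κ // A ∉ I}

/-- The space `X(I)` of sequences of positive sets with nonempty intersection
whose finite prefix intersections are positive. -/
def XI {κ : Type*} (I : Set (Set κ)) : Set (ℕ → PosSet I) :=
  {x | (⋂ n, (x n : Set κ)).Nonempty ∧ ∀ n : ℕ, (⋂ m < n, (x m : Set κ)) ∉ I}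

/-- An `I`-partition of `S`: a maximal family of `I`-positive subsets of `S`
pairwise intersecting in `I`. -/
def IsIPartition {κ : Type*} (I : Set (Set κ)) (S : Set κ) (W : Set (Set κ)) : Prop :=
  (∀ A ∈ W, A ⊆ S ∧ A ∉ I) ∧ (W.Pairwise fun A B => A ∩ B ∈ I) ∧
  ∀ B ⊆ S, B ∉ I → ∃ A ∈ W, A ∩ B ∉ I

/-- `W₁` refines `W₂`. -/
def Refines {κ : Type*} (W₁ W₂ : Set (Set κ)) : Prop := ∀ A ∈ W₁, ∃ B ∈ W₂, A ⊆ B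

/-- `I` is a precipitous ideal on `κ`. -/
def IsPrecipitous {κ : Type u} (I : Set (Set κ)) : Prop :=
  (∀ a : κ, ({a} : Set κ) ∈ I) ∧
  (∀ A B : Set κ, A ∈ I → B ⊆ A → B ∈ I) ∧
  (∀ s : Set (Set κ), Cardinal.mk s < Cardinal.mk κ → s ⊆ I → ⋃₀ s ∈ I) ∧
  (Set.univ : Set κ) ∉ I ∧
  ∀ S : Set κ, S ∉ I → ∀ W : ℕ → Set (Set κ),
    (∀ n, IsIPartition I S (W n)) → (∀ n, Refines (W (n + 1)) (W n)) →
    ∃ Y : ℕ → Set κ, (∀ n, Y n ∈ W n) ∧ (∀ n, Y (n + 1) ⊆ Y n) ∧ (⋂ n, Y n).Nonempty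

instance {κ : Type*} (I : Set (Set κ)) : TopologicalSpace (PosSet I) := ⊥

instance {κ : Type*} (I : Set (Set κ)) : DiscreteTopology (PosSet I) := ⟨rfl⟩

/-- The first-difference metric on sequences of positive sets. -/
noncomputable instance {κ : Type*} (I : Set (Set κ)) : MetricSpace (ℕ → PosSet I) :=
  PiNat.metricSpace


/-- If there is a decreasing sequence of sets all of whose finite intersections
are `I`-positive but whose total intersection is in `I`, then the metric space
`X(I)` is not complete. -/
theorem stmt_11 {κ : Type u} (I : Set (Set κ))
    (hempty : (∅ : Set κ) ∈ I)
    (hdown : ∀ A B : Set κ, A ∈ I → B ⊆ A → B ∈ I)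
    (hunion : ∀ A B : Set κ, A ∈ I → B ∈ I → A ∪ B ∈ I)
    (A : ℕ → Set κ) (hdec : ∀ k, A (k + 1) ⊆ A k)
    (hpos : ∀ n, (⋂ k ≤ n, A k) ∉ I)
    (hint : (⋂ k, A k) ∈ I) :
    ¬ CompleteSpace (XI I) := by
  intro hcomp
  -- A is antitone
  have hanti : ∀ {m n : ℕ}, m ≤ n → A n ⊆ A m := by
    intro m n h
    induction h with
    | refl => rfl
    | step h ih => exact (hdec _).trans ih
  have hApos : ∀ n, A n ∉ I := by
    intro n
    have : (⋂ k ≤ n, A k) = A n := by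
      apply subset_antisymm
      · exact Set.biInter_subset_of_mem (le_refl n)
      · intro x hx
        simp only [Set.mem_iInter]
        intro k hk
        exact hanti hk hx
    rw [← this]
    exact hpos n
  -- B n = A n \ ⋂ A
  set B : ℕ → Set κ := fun n => A n \ (⋂ k, A k) with hB
  have hBpos : ∀ n, B n ∉ I := by
    intro n hBn
    apply hApos n
    apply hdown (B n ∪ ⋂ k, A k) _ (hunion _ _ hBn hint)
    intro x hx
    by_cases hx2 : x ∈ ⋂ k, A k
    · exact Or.inr hx2
    · exact Or.inl ⟨hx, hx2⟩
  have hBdec : ∀ {m n : ℕ}, m ≤ n → B n ⊆ B m := fun h x hx => ⟨hanti h hx.1, hx.2⟩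
  have hBne : ∀ n, (B n).Nonempty := by
    intro n
    rw [Set.nonempty_iff_ne_empty]
    intro h
    exact hBpos n (h ▸ hempty)
  have hBint : (⋂ n, B n) = ∅ := by
    ext x
    simp only [Set.mem_iInter, Set.mem_empty_iff_false, iff_false]
    intro h
    exact (h 0).2 (Set.mem_iInter.2 fun k => (h k).1)
  have huniv : (Set.univ : Set κ) ∉ I := fun h => hApos 0 (hdown _ _ h (Set.subset_univ _))
  -- the Cauchy sequence
  have hprefix : ∀ (g : ℕ → PosSet I), (∀ n, (g n : Set κ) = B n) →
      ∀ n : ℕ, (⋂ m < n, (g m : Set κ)) ∉ I := by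
    intro g hg n
    have : (⋂ m < n, (g m : Set κ)) = if h : n = 0 then Set.univ else B (n - 1) := by
      split_ifs with h
      · subst h; simp
      · apply subset_antisymm
        · intro x hx
          have := Set.mem_iInter₂.1 hx (n-1) (by omega)
          rwa [hg] at this
        · intro x hx
          simp only [Set.mem_iInter]
          intro m hm
          rw [hg m]
          exact hBdec (show m ≤ n-1 by omega) hx
    rw [this]
    split_ifs
    · exact huniv
    · exact hBpos _
  classical
  let f : ℕ → XI I := fun m =>
    ⟨fun n => ⟨B (min n m), hBpos _⟩, by
      constructor
      · obtain ⟨x, hx⟩ := hBne m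
        exact ⟨x, Set.mem_iInter.2 fun n => hBdec (min_le_right n m) hx⟩
      · intro n
        have : (⋂ k < n, ((fun n => (⟨B (min n m), hBpos _⟩ : PosSet I)) k : Set κ))
            = if h : n = 0 then Set.univ else B (min (n-1) m) := by
          split_ifs with h
          · subst h; simp
          · apply subset_antisymm
            · intro x hx
              exact Set.mem_iInter₂.1 hx (n-1) (by omega)
            · intro x hx
              simp only [Set.mem_iInter]
              intro k hk
              exact hBdec (show min k m ≤ min (n-1) m by omega) hx
        rw [this]
        split_ifs
        · exact huniv
        · exact hBpos _⟩
  have hfval : ∀ m n, ((f m : ℕ → PosSet I) n : Set κ) = B (min n m) := fun m n => rfl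
  have hagree : ∀ {m m' : ℕ}, m ≤ m' → ∀ i < m, (f m' : ℕ → PosSet I) i = (f m : ℕ → PosSet I) i := by
    intro m m' h i hi
    apply Subtype.ext
    show B (min i m') = B (min i m)
    have h : min i m' = min i m := by omega
    rw [h]
  have hcauchy : CauchySeq f := by
    rw [Metric.cauchySeq_iff']
    intro ε hε
    obtain ⟨N, hN⟩ := exists_pow_lt_of_lt_one hε (by norm_num : (1/2 : ℝ) < 1)
    refine ⟨N, fun m hm => ?_⟩
    have key : dist ((f m : XI I) : ℕ → PosSet I) ((f N : XI I) : ℕ → PosSet I) ≤ (1/2)^N := by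
      rw [← PiNat.mem_cylinder_iff_dist_le]
      intro i hi
      exact hagree hm i hi
    calc dist (f m) (f N) = dist ((f m : XI I) : ℕ → PosSet I) ((f N : XI I) : ℕ → PosSet I) :=
          Subtype.dist_eq _ _
      _ ≤ (1/2)^N := key
      _ < ε := hN
  obtain ⟨a, ha⟩ := cauchySeq_tendsto_of_complete hcauchy
  have hav : Filter.Tendsto (fun m => ((f m : XI I) : ℕ → PosSet I)) Filter.atTop
      (nhds ((a : XI I) : ℕ → PosSet I)) :=
    (continuous_subtype_val.tendsto _).comp ha
  have hcoord : ∀ n : ℕ, ((a : XI I) : ℕ → PosSet I) n = ⟨B n, hBpos n⟩ := by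
    intro n
    have h1 : Filter.Tendsto (fun m => ((f m : XI I) : ℕ → PosSet I) n) Filter.atTop
        (nhds (((a : XI I) : ℕ → PosSet I) n)) := ((continuous_apply n).tendsto _).comp hav
    have h2 : ∀ᶠ m in Filter.atTop, ((f m : XI I) : ℕ → PosSet I) n = (⟨B n, hBpos n⟩ : PosSet I) := by
      filter_upwards [Filter.eventually_ge_atTop n] with m hm
      apply Subtype.ext
      show B (min n m) = B n
      have h : min n m = n := by omega
      rw [h]
    have h3 : Filter.Tendsto (fun m => ((f m : XI I) : ℕ → PosSet I) n) Filter.atTop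
        (nhds (⟨B n, hBpos n⟩ : PosSet I)) := Filter.Tendsto.congr' (Filter.EventuallyEq.symm h2) tendsto_const_nhds
    exact tendsto_nhds_unique h1 h3
  obtain ⟨x, hx⟩ := a.2.1
  have : x ∈ (⋂ n, B n) := by
    rw [Set.mem_iInter] at hx ⊢
    intro n
    have := hx n
    rwa [hcoord n] at this
  rw [hBint] at this
  exact this
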